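/- Let n ≥ 1, l ≥ 0, m ≥ 0. For j ∈ {1, …, l} let P_j ⊆ {1, …, n} be a set of exactly three variables (a positive clause), and for i ∈ {1, …, m} let N_i = (N_i(1), N_i(2), N_i(3)) be a triple of three distinct elements of {1, …, n} (a negative clause). Define the graph G with vertex set {v_1, …, v_n} ∪ {p_1, …, p_l} ∪ {x} ∪ {n_{i,j} : 1 ≤ i ≤ m, 1 ≤ j ≤ 5} (all vertices distinct) and edges: all pairs v_i v_{i'} for i ≠ i' (so the variable vertices form a clique); x v_i for every i; p_j v_i exactly when i ∈ P_j; for each i ∈ {1, …, m}, the edges n_{i,j} n_{i,j'} for every j ∈ {1,2,3} and j' ∈ {4,5} (a complete bipartite K_{3,2}); and, for each i ∈ {1, …, m} and j ∈ {1,2,3}, the edge n_{i,j} v_{N_i(j)}; there are no other edges. Let Z_1 = {p_1, …, p_l, x} and, for 2 ≤ i ≤ m+1, Z_i = {n_{i-1,4}, n_{i-1,5}}. Then there exists a truth assignment τ : {1, …, n} → {true, false} such that every positive clause P_j contains a variable set to true and every negative clause N_i contains a variable set to false if and only if G has pairwise disjoint, pairwise anticomplete vertex sets D_1, …, D_{m+1}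 such that each G[D_i] is connected and Z_i ⊆ D_i for every i ∈ {1, …, m+1}. -/
import Mathlib


/-- The graph built from an instance of Monotone 3-Satisfiability with `n` variables,
`l` positive clauses `P` and `m` negative clauses `N`.  Vertices: variable vertices
`v_i = Sum.inl (Sum.inl i)`, positive-clause vertices `p_j = Sum.inl (Sum.inr (Sum.inl j))`,
the extra vertex `x = Sum.inl (Sum.inr (Sum.inr ()))`, literal vertices
`n_{i,1},n_{i,2},n_{i,3} = Sum.inr (i, Sum.inl j)` and the vertices
`n_{i,4},n_{i,5} = Sum.inr (i, Sum.inr j)` of each negative-clause gadget.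
Edges: the variable vertices form a clique; `x` is adjacent to every `v_i`; `p_j` is
adjacent to `v_i` iff `i ∈ P j`; each negative-clause gadget is a complete bipartite
`K₍₃,₂₎` between its literal vertices and its two extra vertices; and the literal vertex
`n_{i,j}` is adjacent to the variable vertex of `N i j`.  There are no other edges. -/
def monoGadget (n l m : ℕ) (P : Fin l → Finset (Fin n)) (N : Fin m → Fin 3 → Fin n) :
    SimpleGraph ((Fin n ⊕ Fin l ⊕ Unit) ⊕ (Fin m × (Fin 3 ⊕ Fin 2))) :=
  SimpleGraph.fromRel fun a b => match a, b with
    | Sum.inl (Sum.inl _), Sum.inl (Sum.inl _) => True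
    | Sum.inl (Sum.inr (Sum.inr _)), Sum.inl (Sum.inl _) => True
    | Sum.inl (Sum.inr (Sum.inl j)), Sum.inl (Sum.inl i) => i ∈ P j
    | Sum.inr (i, Sum.inl _), Sum.inr (i', Sum.inr _) => i = i'
    | Sum.inr (i, Sum.inl j), Sum.inl (Sum.inl i₀) => N i j = i₀
    | _, _ => False

/-- Helper: a reachable pair of distinct vertices yields a neighbour of the first. -/
theorem exists_adj_of_reachable' {V : Type*} {G : SimpleGraph V} {u v : V}
    (h : G.Reachable u v) (hne : u ≠ v) : ∃ w, G.Adj u w := by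
  obtain ⟨p⟩ := h
  cases p with
  | nil => exact absurd rfl hne
  | cons h _ => exact ⟨_, h⟩

/-- the monotone 3-Sat instance is satisfiable (every positive clause has a
true variable and every negative clause a false variable) iff the gadget graph has
pairwise disjoint, pairwise anticomplete connected sets `D_1, …, D_{m+1}` with
`Z₁ = {p_1,…,p_l, x} ⊆ D_1` and `Z_{i+1} = {n_{i,4}, n_{i,5}} ⊆ D_{i+1}` for every `i`. -/
theorem mono3sat_iff_gadget (n l m : ℕ) (hn : 1 ≤ n)
    (P : Fin l → Finset (Fin n)) (hP : ∀ j, (P j).card = 3)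
    (N : Fin m → Fin 3 → Fin n) (hN : ∀ i, Function.Injective (N i)) :
    (∃ τ : Fin n → Bool,
        (∀ j : Fin l, ∃ i ∈ P j, τ i = true) ∧
        (∀ i : Fin m, ∃ j : Fin 3, τ (N i j) = false)) ↔
    (∃ D : Fin (m + 1) → Set ((Fin n ⊕ Fin l ⊕ Unit) ⊕ (Fin m × (Fin 3 ⊕ Fin 2))),
        (∀ i j, i ≠ j → Disjoint (D i) (D j)) ∧
        (∀ i j, i ≠ j → ∀ a ∈ D i, ∀ b ∈ D j, ¬ (monoGadget n l m P N).Adj a b) ∧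
        (∀ i, ((monoGadget n l m P N).induce (D i)).Connected) ∧
        (∀ j : Fin l, Sum.inl (Sum.inr (Sum.inl j)) ∈ D 0) ∧
        (Sum.inl (Sum.inr (Sum.inr ())) ∈ D 0) ∧
        (∀ i : Fin m, Sum.inr (i, Sum.inr 0) ∈ D i.succ ∧
          Sum.inr (i, Sum.inr 1) ∈ D i.succ)) := by
  classical
  constructor
  · rintro ⟨τ, hpos, hneg⟩
    set D0 : Set ((Fin n ⊕ Fin l ⊕ Unit) ⊕ (Fin m × (Fin 3 ⊕ Fin 2))) :=
      fun a => match a with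
        | Sum.inl (Sum.inl k) => τ k = true
        | Sum.inl (Sum.inr _) => True
        | Sum.inr _ => False with hD0
    set DG : Fin m → Set ((Fin n ⊕ Fin l ⊕ Unit) ⊕ (Fin m × (Fin 3 ⊕ Fin 2))) :=
      fun i a => match a with
        | Sum.inl _ => False
        | Sum.inr (i', Sum.inl j) => i' = i ∧ τ (N i' j) = false
        | Sum.inr (i', Sum.inr _) => i' = i with hDG
    refine ⟨Fin.cases D0 DG, ?_, ?_, ?_, ?_, ?_, ?_⟩
    · -- disjoint
      intro i j hij
      rw [Set.disjoint_left]
      intro a hai haj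
      induction i using Fin.cases with
      | zero =>
        induction j using Fin.cases with
        | zero => exact hij rfl
        | succ j =>
          simp only [Fin.cases_zero, Fin.cases_succ] at hai haj
          rcases a with ((k | pj | u) | ⟨i', j' | j'⟩)
          exacts [haj, haj, haj, hai, hai]
      | succ i =>
        induction j using Fin.cases with
        | zero =>
          simp only [Fin.cases_zero, Fin.cases_succ] at hai haj
          rcases a with ((k | pj | u) | ⟨i', j' | j'⟩)
          exacts [hai, hai, hai, haj, haj]
        | succ j =>
          simp only [Fin.cases_succ] at hai haj
          have hij2 : i = j := by
            rcases a with ((k | pj | u) | ⟨i', j' | j'⟩)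
            exacts [hai.elim, hai.elim, hai.elim,
              hai.1.symm.trans haj.1, hai.symm.trans haj]
          exact hij (by rw [hij2])
    · -- anticomplete
      intro i j hij a hai b hbj hadj
      have hadj' : a ≠ b ∧ _ := (SimpleGraph.fromRel_adj _ a b).mp hadj
      obtain ⟨hab, hrel⟩ := hadj'
      induction i using Fin.cases with
      | zero =>
        induction j using Fin.cases with
        | zero => exact hij rfl
        | succ j =>
          simp only [Fin.cases_zero, Fin.cases_succ] at hai hbj
          -- a ∈ D0, b ∈ DG j
          rcases b with ((k' | pj' | u') | ⟨i'', s' | s'⟩)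
          · exact hbj
          · exact hbj
          · exact hbj
          · -- b literal vertex; the only possible edge goes to its variable
            obtain ⟨hi'', hfalse⟩ := hbj
            rcases a with ((k | pj | u) | ⟨i', s | s⟩)
            · rcases hrel with h | h
              · exact h
              · -- h : N i'' s' = k
                rw [h] at hfalse
                rw [hai] at hfalse
                exact Bool.noConfusion hfalse
            · exact hrel.elim id id
            · exact hrel.elim id id
            · exact hai
            · exact hai
          · -- b extra vertex of a gadget : no edges to the left part
            rcases a with ((k | pj | u) | ⟨i', s | s⟩)
            · exact hrel.elim id id
            · exact hrel.elim id id
            · exact hrel.elim id id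
            · exact hai
            · exact hai
      | succ i =>
        induction j using Fin.cases with
        | zero =>
          simp only [Fin.cases_zero, Fin.cases_succ] at hai hbj
          rcases a with ((k | pj | u) | ⟨i', s | s⟩)
          · exact hai
          · exact hai
          · exact hai
          · obtain ⟨hi', hfalse⟩ := hai
            rcases b with ((k' | pj' | u') | ⟨i'', s' | s'⟩)
            · rcases hrel with h | h
              · rw [h] at hfalse; rw [hbj] at hfalse
                exact Bool.noConfusion hfalse
              · exact h
            · exact hrel.elim id id
            · exact hrel.elim id id
            · exact hbj
            · exact hbj
          · rcases b with ((k' | pj' | u') | ⟨i'', s' | s'⟩)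
            · exact hrel.elim id id
            · exact hrel.elim id id
            · exact hrel.elim id id
            · exact hbj
            · exact hbj
        | succ j =>
          simp only [Fin.cases_succ] at hai hbj
          have hij' : i ≠ j := fun h => hij (by rw [h])
          rcases a with ((k | pj | u) | ⟨i', s | s⟩)
          · exact hai
          · exact hai
          · exact hai
          · rcases b with ((k' | pj' | u') | ⟨i'', s' | s'⟩)
            · exact hbj
            · exact hbj
            · exact hbj
            · exact hrel.elim id id
            · -- a literal of gadget i, b extra of gadget j : edge needs i' = i''
              rcases hrel with h | h
              · exact hij' (hai.1.symm.trans (h.trans hbj))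
              · exact h
          · rcases b with ((k' | pj' | u') | ⟨i'', s' | s'⟩)
            · exact hbj
            · exact hbj
            · exact hbj
            · rcases hrel with h | h
              · exact h
              · exact hij' (hai.symm.trans (h.symm.trans hbj.1))
            · exact hrel.elim id id
    · -- connectivity
      intro i
      induction i using Fin.cases with
      | zero =>
        simp only [Fin.cases_zero]
        rw [SimpleGraph.connected_iff_exists_forall_reachable]
        have hxmem : (Sum.inl (Sum.inr (Sum.inr ())) :
            (Fin n ⊕ Fin l ⊕ Unit) ⊕ (Fin m × (Fin 3 ⊕ Fin 2))) ∈ D0 := trivial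
        refine ⟨⟨Sum.inl (Sum.inr (Sum.inr ())), hxmem⟩, ?_⟩
        rintro ⟨(k | pj | u) | ⟨i', s | s⟩, hw⟩
        · refine SimpleGraph.Adj.reachable ?_
          refine SimpleGraph.comap_adj.mpr ?_
          simp only [Function.Embedding.coe_subtype]
          refine (SimpleGraph.fromRel_adj _ _ _).mpr ⟨by simp, Or.inl trivial⟩
        · obtain ⟨i0, hi0, ht0⟩ := hpos pj
          have hv : (Sum.inl (Sum.inl i0) :
              (Fin n ⊕ Fin l ⊕ Unit) ⊕ (Fin m × (Fin 3 ⊕ Fin 2))) ∈ D0 := ht0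
          refine SimpleGraph.Reachable.trans
            (SimpleGraph.Adj.reachable (v := ⟨Sum.inl (Sum.inl i0), hv⟩) ?_)
            (SimpleGraph.Adj.reachable ?_).symm
          · refine SimpleGraph.comap_adj.mpr ?_
            simp only [Function.Embedding.coe_subtype]
            refine (SimpleGraph.fromRel_adj _ _ _).mpr ⟨by simp, Or.inl trivial⟩
          · refine SimpleGraph.comap_adj.mpr ?_
            simp only [Function.Embedding.coe_subtype]
            refine (SimpleGraph.fromRel_adj _ _ _).mpr ⟨by simp, Or.inl hi0⟩
        · cases u; rfl
        · exact False.elim hw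
        · exact False.elim hw
      | succ i =>
        simp only [Fin.cases_succ]
        rw [SimpleGraph.connected_iff_exists_forall_reachable]
        obtain ⟨j0, hj0⟩ := hneg i
        have hhub : (Sum.inr (i, Sum.inl j0) :
            (Fin n ⊕ Fin l ⊕ Unit) ⊕ (Fin m × (Fin 3 ⊕ Fin 2))) ∈ DG i := ⟨rfl, hj0⟩
        refine ⟨⟨Sum.inr (i, Sum.inl j0), hhub⟩, ?_⟩
        have hn4 : (Sum.inr (i, Sum.inr 0) :
            (Fin n ⊕ Fin l ⊕ Unit) ⊕ (Fin m × (Fin 3 ⊕ Fin 2))) ∈ DG i := rfl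
        rintro ⟨(k | pj | u) | ⟨i', s | s⟩, hw⟩
        · exact False.elim hw
        · exact False.elim hw
        · exact False.elim hw
        · obtain ⟨hi', -⟩ : i' = i ∧ τ (N i' s) = false := hw
          subst hi'
          refine SimpleGraph.Reachable.trans
            (SimpleGraph.Adj.reachable (v := ⟨Sum.inr (i', Sum.inr 0), hn4⟩) ?_)
            (SimpleGraph.Adj.reachable ?_).symm
          · refine SimpleGraph.comap_adj.mpr ?_
            simp only [Function.Embedding.coe_subtype]
            refine (SimpleGraph.fromRel_adj _ _ _).mpr ⟨by simp, Or.inl rfl⟩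
          · refine SimpleGraph.comap_adj.mpr ?_
            simp only [Function.Embedding.coe_subtype]
            refine (SimpleGraph.fromRel_adj _ _ _).mpr ⟨by simp, Or.inl rfl⟩
        · have hi' : i' = i := hw
          subst hi'
          refine (SimpleGraph.Adj.reachable ?_)
          refine SimpleGraph.comap_adj.mpr ?_
          simp only [Function.Embedding.coe_subtype]
          refine (SimpleGraph.fromRel_adj _ _ _).mpr ⟨by simp, Or.inl rfl⟩
    · intro j; exact trivial
    · exact trivial
    · intro i
      constructor
      · simp only [Fin.cases_succ]; exact rfl
      · simp only [Fin.cases_succ]; exact rfl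
  · rintro ⟨D, hdisj, hanti, hconn, hp, hx, hn45⟩
    refine ⟨fun k => if Sum.inl (Sum.inl k) ∈ D 0 then true else false, ?_, ?_⟩
    · -- positive clauses
      intro j
      have hne : (⟨Sum.inl (Sum.inr (Sum.inl j)), hp j⟩ : (D 0 : Set _)) ≠
          ⟨Sum.inl (Sum.inr (Sum.inr ())), hx⟩ := by
        intro h
        have := congrArg Subtype.val h
        simp at this
      obtain ⟨⟨b, hb⟩, hadj⟩ := exists_adj_of_reachable'
        ((hconn 0).preconnected _ _) hne
      have hadj2 : (monoGadget n l m P N).Adj (Sum.inl (Sum.inr (Sum.inl j))) b :=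
        SimpleGraph.comap_adj.mp hadj
      obtain ⟨hab, hrel⟩ := (SimpleGraph.fromRel_adj _ _ _).mp hadj2
      rcases b with ((k | pj' | u') | ⟨i'', s' | s'⟩)
      · refine ⟨k, hrel.elim id (fun h => h.elim), ?_⟩
        simp [hb]
      · exact (hrel.elim id id).elim
      · exact (hrel.elim id id).elim
      · exact (hrel.elim id id).elim
      · exact (hrel.elim id id).elim
    · -- negative clauses
      intro i
      have hne : (⟨Sum.inr (i, Sum.inr 0), (hn45 i).1⟩ : (D i.succ : Set _)) ≠
          ⟨Sum.inr (i, Sum.inr 1), (hn45 i).2⟩ := by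
        intro h
        have := congrArg Subtype.val h
        simp at this
      obtain ⟨⟨b, hb⟩, hadj⟩ := exists_adj_of_reachable'
        ((hconn i.succ).preconnected _ _) hne
      have hadj2 : (monoGadget n l m P N).Adj (Sum.inr (i, Sum.inr 0)) b :=
        SimpleGraph.comap_adj.mp hadj
      obtain ⟨hab, hrel⟩ := (SimpleGraph.fromRel_adj _ _ _).mp hadj2
      rcases b with ((k | pj' | u') | ⟨i'', s' | s'⟩)
      · exact (hrel.elim id id).elim
      · exact (hrel.elim id id).elim
      · exact (hrel.elim id id).elim
      · -- b is a literal vertex of gadget i'' with i'' = i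
        have hii : i'' = i := hrel.elim (fun h => h.elim) id
        subst hii
        refine ⟨s', ?_⟩
        have hv : Sum.inl (Sum.inl (N i'' s')) ∉ D 0 := by
          intro hv
          refine hanti i''.succ 0 (Fin.succ_ne_zero i'') _ hb _ hv ?_
          refine (SimpleGraph.fromRel_adj _ _ _).mpr ⟨by simp, Or.inl rfl⟩
        simp [hv]
      · exact (hrel.elim id id).elim
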